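/- Exact-derivative structure of the magnetic terms: let η : ℝ × Ω → ℝ³ be smooth with ∂ₜη = u, write η = (η₁,η₂,η₃), η_* = (η₁,η₂), div_* η_* = ∂₁η₁ + ∂₂η₂. Then pointwise (and hence after integration over Ω) the expression ∂₃η·∂₃u − (div η)(∂₃u₃) + (div η)(div u) − (∂₃η₃)(div u) equals (1/2) d/dt [ |∂₃η_*|² + |div_* η_*|² ]. -/

import Mathlib

open Matrix

/-- `matDeriv η x i j = ∂ⱼ ηᵢ (x)`. -/
noncomputable def matDeriv (η : (Fin 3 → ℝ) → Fin 3 → ℝ) (x : Fin 3 → ℝ) :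
    Matrix (Fin 3) (Fin 3) ℝ :=
  fun i j => fderiv ℝ (fun y => η y i) x (Pi.single j 1)

lemma matDeriv_hasDerivAt (η u : ℝ → (Fin 3 → ℝ) → Fin 3 → ℝ)
    (hη : ContDiff ℝ (⊤ : ℕ∞) (Function.uncurry η))
    (hu : ∀ t x i, deriv (fun s => η s x i) t = u t x i)
    (i j : Fin 3) (t : ℝ) (x : Fin 3 → ℝ) :
    HasDerivAt (fun s => matDeriv (η s) x i j) (matDeriv (u t) x i j) t := by
  set e : Fin 3 → ℝ := Pi.single j 1 with he
  set F : ℝ × (Fin 3 → ℝ) → ℝ := fun p => η p.1 p.2 i with hF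
  have hFc : ContDiff ℝ (⊤ : ℕ∞) F := (contDiff_pi.mp hη) i
  have hFd : Differentiable ℝ F := hFc.differentiable (by simp)
  have hf' : ContDiff ℝ (⊤ : ℕ∞) (fderiv ℝ F) := hFc.fderiv_right (by simp)
  have hf'd : Differentiable ℝ (fderiv ℝ F) := hf'.differentiable (by simp)
  set f'' := fderiv ℝ (fderiv ℝ F) (t, x) with hf''
  -- spatial derivative representation
  have hrep : ∀ (s : ℝ) (y : Fin 3 → ℝ),
      matDeriv (η s) y i j = fderiv ℝ F (s, y) (0, e) := by
    intro s y
    have h2 : HasFDerivAt (fun z : Fin 3 → ℝ => ((s : ℝ), z))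
        (ContinuousLinearMap.inr ℝ ℝ (Fin 3 → ℝ)) y := hasFDerivAt_prodMk_right s y
    have h1 : HasFDerivAt F (fderiv ℝ F (s, y)) (s, y) := (hFd (s, y)).hasFDerivAt
    have h3 := h1.comp y h2
    have h4 : matDeriv (η s) y i j = fderiv ℝ (fun z => η s z i) y e := rfl
    rw [h4, show (fun z => η s z i) = F ∘ (fun z => (s, z)) from rfl, h3.fderiv]
    rfl
  -- time derivative representation
  have hurep : ∀ (s : ℝ) (y : Fin 3 → ℝ),
      u s y i = fderiv ℝ F (s, y) (1, 0) := by
    intro s y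
    rw [← hu s y i]
    have h2 : HasDerivAt (fun r : ℝ => (r, y)) ((1 : ℝ), (0 : Fin 3 → ℝ)) s :=
      (hasDerivAt_id s).prodMk (hasDerivAt_const s y)
    have h1 : HasFDerivAt F (fderiv ℝ F (s, y)) (s, y) := (hFd (s, y)).hasFDerivAt
    have h3 : HasDerivAt (fun r : ℝ => F (r, y)) (fderiv ℝ F (s, y) (1, 0)) s :=
      by have := h1.comp_hasDerivAt s h2; exact this
    exact h3.deriv
  -- symmetry of second derivative
  have hsymm : f'' ((1 : ℝ), (0 : Fin 3 → ℝ)) ((0 : ℝ), e)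
      = f'' ((0 : ℝ), e) ((1 : ℝ), (0 : Fin 3 → ℝ)) :=
    second_derivative_symmetric (fun y => (hFd y).hasFDerivAt)
      ((hf'd (t, x)).hasFDerivAt) _ _
  -- left-hand side: derivative in time of spatial derivative
  have hG : HasFDerivAt (fun p : ℝ × (Fin 3 → ℝ) => fderiv ℝ F p ((0 : ℝ), e))
      ((fderiv ℝ F (t, x)).comp (0 : (ℝ × (Fin 3 → ℝ)) →L[ℝ] (ℝ × (Fin 3 → ℝ)))
        + f''.flip ((0 : ℝ), e)) (t, x) :=
    ((hf'd (t, x)).hasFDerivAt).clm_apply (hasFDerivAt_const _ _)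
  have hGd : HasDerivAt (fun s : ℝ => fderiv ℝ F (s, x) ((0 : ℝ), e))
      (((fderiv ℝ F (t, x)).comp (0 : (ℝ × (Fin 3 → ℝ)) →L[ℝ] (ℝ × (Fin 3 → ℝ)))
        + f''.flip ((0 : ℝ), e)) ((1 : ℝ), (0 : Fin 3 → ℝ))) t :=
    by have := hG.comp_hasDerivAt t ((hasDerivAt_id t).prodMk (hasDerivAt_const t x)); exact this
  -- identify the value with matDeriv (u t) x i j
  have hH : HasFDerivAt (fun p : ℝ × (Fin 3 → ℝ) => fderiv ℝ F p ((1 : ℝ), (0 : Fin 3 → ℝ)))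
      ((fderiv ℝ F (t, x)).comp (0 : (ℝ × (Fin 3 → ℝ)) →L[ℝ] (ℝ × (Fin 3 → ℝ)))
        + f''.flip ((1 : ℝ), (0 : Fin 3 → ℝ))) (t, x) :=
    ((hf'd (t, x)).hasFDerivAt).clm_apply (hasFDerivAt_const _ _)
  have hH2 := hH.comp x (hasFDerivAt_prodMk_right t x)
  have hval : matDeriv (u t) x i j
      = f'' ((0 : ℝ), e) ((1 : ℝ), (0 : Fin 3 → ℝ)) := by
    have h4 : matDeriv (u t) x i j = fderiv ℝ (fun y => u t y i) x e := rfl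
    have h5 : (fun y : Fin 3 → ℝ => u t y i)
        = (fun p : ℝ × (Fin 3 → ℝ) => fderiv ℝ F p ((1 : ℝ), (0 : Fin 3 → ℝ)))
            ∘ (fun y : Fin 3 → ℝ => (t, y)) := funext fun y => hurep t y
    rw [h4, h5, hH2.fderiv]
    simp
  have hfun : (fun s => matDeriv (η s) x i j)
      = fun s : ℝ => fderiv ℝ F (s, x) ((0 : ℝ), e) := funext fun s => hrep s x
  rw [hfun, hval, ← hsymm]
  convert hGd using 1
  simp

/-- Exact-derivative structure of the magnetic terms: for smooth `η` with
`∂ₜη = u` one has pointwise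
`∂₃η·∂₃u − (div η)(∂₃u₃) + (div η)(div u) − (∂₃η₃)(div u)
  = (1/2) d/dt [ |∂₃η_*|² + |div_* η_*|² ]`
(coordinates: `0,1` horizontal, `2` vertical). -/
theorem stmt15 (η u : ℝ → (Fin 3 → ℝ) → Fin 3 → ℝ)
    (hη : ContDiff ℝ (⊤ : ℕ∞) (Function.uncurry η))
    (hu : ∀ t x i, deriv (fun s => η s x i) t = u t x i) :
    ∀ t x,
      (∑ i, matDeriv (η t) x i 2 * matDeriv (u t) x i 2)
        - (∑ j, matDeriv (η t) x j j) * matDeriv (u t) x 2 2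
        + (∑ j, matDeriv (η t) x j j) * (∑ j, matDeriv (u t) x j j)
        - matDeriv (η t) x 2 2 * (∑ j, matDeriv (u t) x j j)
      = deriv (fun s => (1 / 2) *
          ((matDeriv (η s) x 0 2) ^ 2 + (matDeriv (η s) x 1 2) ^ 2
            + (matDeriv (η s) x 0 0 + matDeriv (η s) x 1 1) ^ 2)) t := by
  intro t x
  have k : ∀ i j : Fin 3,
      HasDerivAt (fun s => matDeriv (η s) x i j) (matDeriv (u t) x i j) t :=
    fun i j => matDeriv_hasDerivAt η u hη hu i j t x
  have h := (((((k 0 2).pow 2).add ((k 1 2).pow 2)).add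
      (((k 0 0).add (k 1 1)).pow 2)).const_mul ((1 : ℝ) / 2))
  simp only [Pi.add_apply, Pi.pow_apply] at h
  rw [h.deriv]
  simp only [Fin.sum_univ_three]
  push_cast
  ring
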